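/- Let p be a prime and f₀, f₂ : ℤ/pℤ → ℂ, K : (ℤ/pℤ)² → ℂ, and f₁ : ℤ/pℤ → ℂ. Then |∑_{n₁,n₂} f̂₀(-n₁-n₂) f̂₁(n₁) f̂₂(n₂) K(n₁,n₂)| ≤ ‖f₂‖₂ ‖f₁‖₂ · (∑_{n₁,m₁,n₂,m₂} f̂₀(-n₁-n₂) conj(f̂₀)(-m₁-n₂) conj(f̂₀)(-n₁-m₂) f̂₀(-m₁-m₂) K(n₁,n₂) conj(K)(m₁,n₂) conj(K)(n₁,m₂) K(m₁,m₂))^{1/4}, where in particular the quantity inside the fourth root is a nonnegative real number. -/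

import Mathlib

/-!
Write `M n₁ n₂ = f̂₀(-n₁-n₂) K(n₁,n₂)`, so that the sum is `∑ₙ₂ f̂₂(n₂) (f̂₁ ᵥ* M)(n₂)`.
Cauchy–Schwarz in `n₂` bounds it by `‖f̂₂‖ ‖f̂₁ ᵥ* M‖`, and
`‖b ᵥ* M‖² = ∑_{n₁,m₁} b(n₁) b̄(m₁) (M Mᴴ)(n₁,m₁)`, so a second Cauchy–Schwarz in `(n₁,m₁)` gives
`‖b ᵥ* M‖² ≤ ‖b‖² ‖M Mᴴ‖_F`. The quantity `T` is exactly `‖M Mᴴ‖_F²`, which makes it a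
nonnegative real, and Parseval turns the `ℓ²` norms of `f̂₁`, `f̂₂` into `L2 p f₁`, `L2 p f₂`.
-/

open Finset

noncomputable def ep (p : ℕ) (x : ZMod p) : ℂ :=
  Complex.exp (2 * Real.pi * Complex.I * x.val / p)

noncomputable def ft (p : ℕ) [NeZero p] (f : ZMod p → ℂ) (ξ : ZMod p) : ℂ :=
  (1 / p) * ∑ x : ZMod p, f x * ep p (-(x * ξ))

noncomputable def L2 (p : ℕ) [NeZero p] (f : ZMod p → ℂ) : ℝ :=
  Real.sqrt ((1 / p) * ∑ x : ZMod p, ‖f x‖ ^ 2)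

open Matrix ComplexConjugate

theorem Complex.norm_sum_mul_le_sqrt_mul_sqrt {ι : Type*} (s : Finset ι) (f g : ι → ℂ) :
    ‖∑ i ∈ s, f i * g i‖ ≤ √(∑ i ∈ s, ‖f i‖ ^ 2) * √(∑ i ∈ s, ‖g i‖ ^ 2) :=
  (norm_sum_le _ _).trans <| by
    simpa only [norm_mul] using Real.sum_mul_le_sqrt_mul_sqrt s (‖f ·‖) (‖g ·‖)

namespace Matrix

variable {ι κ : Type*} [Fintype ι] [Fintype κ] (M : Matrix ι κ ℂ)

theorem ofReal_sum_norm_mul_conjTranspose_sq :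
    ((∑ i, ∑ i', ‖(M * Mᴴ) i i'‖ ^ 2 : ℝ) : ℂ) =
      ∑ i, ∑ i', ∑ j, ∑ j', M i j * conj (M i' j) * conj (M i j') * M i' j' := by
  push_cast
  refine sum_congr rfl fun i _ => sum_congr rfl fun i' _ => ?_
  simp only [← Complex.mul_conj', mul_apply, conjTranspose_apply, Complex.star_def, map_sum,
    map_mul, Complex.conj_conj, sum_mul_sum]
  refine sum_congr rfl fun j _ => sum_congr rfl fun j' _ => ?_
  ring

theorem ofReal_sum_norm_vecMul_sq (b : ι → ℂ) :
    ((∑ j, ‖(b ᵥ* M) j‖ ^ 2 : ℝ) : ℂ) = ∑ i, ∑ i', b i * conj (b i') * (M * Mᴴ) i i' := by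
  push_cast
  simp only [← Complex.mul_conj', vecMul, dotProduct, mul_apply, conjTranspose_apply,
    Complex.star_def, map_sum, map_mul, sum_mul_sum]
  simp only [mul_sum]
  rw [sum_comm]
  refine sum_congr rfl fun i _ => ?_
  rw [sum_comm]
  refine sum_congr rfl fun i' _ => sum_congr rfl fun j _ => ?_
  ring

theorem sum_norm_vecMul_sq_le (b : ι → ℂ) :
    ∑ j, ‖(b ᵥ* M) j‖ ^ 2 ≤ (∑ i, ‖b i‖ ^ 2) * √(∑ i, ∑ i', ‖(M * Mᴴ) i i'‖ ^ 2) := by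
  have hb : √(∑ q : ι × ι, ‖b q.1 * conj (b q.2)‖ ^ 2) = ∑ i, ‖b i‖ ^ 2 := by
    simp only [norm_mul, Complex.norm_conj, mul_pow, Fintype.sum_prod_type, ← sum_mul_sum]
    exact Real.sqrt_mul_self (by positivity)
  calc ∑ j, ‖(b ᵥ* M) j‖ ^ 2 = ‖((∑ j, ‖(b ᵥ* M) j‖ ^ 2 : ℝ) : ℂ)‖ := by
        rw [Complex.norm_real, Real.norm_of_nonneg (by positivity)]
    _ = ‖∑ q : ι × ι, b q.1 * conj (b q.2) * (M * Mᴴ) q.1 q.2‖ := by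
        rw [ofReal_sum_norm_vecMul_sq, Fintype.sum_prod_type]
    _ ≤ _ := by
        rw [← hb, ← Fintype.sum_prod_type']
        exact Complex.norm_sum_mul_le_sqrt_mul_sqrt _ _ _

theorem norm_sum_sum_mul_le (b : ι → ℂ) (c : κ → ℂ) :
    ‖∑ i, ∑ j, b i * c j * M i j‖ ≤
      √(∑ j, ‖c j‖ ^ 2) * √(∑ i, ‖b i‖ ^ 2) *
        (∑ i, ∑ i', ‖(M * Mᴴ) i i'‖ ^ 2) ^ (1 / 4 : ℝ) := by
  calc ‖∑ i, ∑ j, b i * c j * M i j‖ = ‖∑ j, c j * (b ᵥ* M) j‖ := by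
        simp only [vecMul, dotProduct, mul_sum]
        rw [sum_comm]
        exact congrArg _ (sum_congr rfl fun j _ => sum_congr rfl fun i _ => by ring)
    _ ≤ √(∑ j, ‖c j‖ ^ 2) * √(∑ j, ‖(b ᵥ* M) j‖ ^ 2) :=
        Complex.norm_sum_mul_le_sqrt_mul_sqrt _ _ _
    _ ≤ √(∑ j, ‖c j‖ ^ 2) * √((∑ i, ‖b i‖ ^ 2) * √(∑ i, ∑ i', ‖(M * Mᴴ) i i'‖ ^ 2)) := by
        gcongr
        exact sum_norm_vecMul_sq_le M b
    _ = _ := by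
        have hroot : √√(∑ i, ∑ i', ‖(M * Mᴴ) i i'‖ ^ 2) =
            (∑ i, ∑ i', ‖(M * Mᴴ) i i'‖ ^ 2) ^ (1 / 4 : ℝ) := by
          rw [Real.sqrt_eq_rpow, Real.sqrt_eq_rpow, ← Real.rpow_mul (by positivity)]
          norm_num
        rw [Real.sqrt_mul (by positivity), hroot, mul_assoc]

end Matrix

theorem ZMod.sum_norm_dft_sq {N : ℕ} [NeZero N] (Φ : ZMod N → ℂ) :
    ∑ k, ‖dft Φ k‖ ^ 2 = N * ∑ j, ‖Φ j‖ ^ 2 := by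
  have hψ (j j' k : ZMod N) :
      stdAddChar (-(j * k)) * conj (stdAddChar (-(j' * k))) = stdAddChar (k * (j' - j)) := by
    rw [← AddChar.map_neg_eq_conj, neg_neg, ← AddChar.map_add_eq_mul]
    ring_nf
  have hsum (j j' : ZMod N) : ∑ k, stdAddChar (k * (j' - j)) = if j = j' then (N : ℂ) else 0 := by
    rw [AddChar.sum_mulShift _ (isPrimitive_stdAddChar N), ZMod.card]
    simp only [sub_eq_zero, eq_comm, apply_ite (Nat.cast : ℕ → ℂ), Nat.cast_zero]
  apply Complex.ofReal_injective
  push_cast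
  simp only [← Complex.mul_conj']
  calc ∑ k, dft Φ k * conj (dft Φ k)
      = ∑ j, ∑ j', Φ j * conj (Φ j') * ∑ k, stdAddChar (k * (j' - j)) := by
        simp only [dft_apply, smul_eq_mul, map_sum, map_mul, sum_mul_sum]
        simp only [mul_sum, ← hψ]
        rw [sum_comm]
        refine sum_congr rfl fun j _ => ?_
        rw [sum_comm]
        exact sum_congr rfl fun j' _ => sum_congr rfl fun k _ => by ring
    _ = N * ∑ j, Φ j * conj (Φ j) := by
        simp only [hsum, mul_ite, mul_zero, sum_ite_eq, mem_univ, if_true, mul_sum]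
        exact sum_congr rfl fun j _ => by ring

section Fourier

variable {p : ℕ} [NeZero p]

theorem ep_eq_stdAddChar (x : ZMod p) : ep p x = ZMod.stdAddChar x := by
  rw [ZMod.stdAddChar_apply, ZMod.toCircle_apply, ep]

theorem ft_eq_inv_mul_dft (f : ZMod p → ℂ) (ξ : ZMod p) :
    ft p f ξ = (p : ℂ)⁻¹ * ZMod.dft f ξ := by
  simp only [ft, ZMod.dft_apply, ep_eq_stdAddChar, smul_eq_mul, one_div, mul_comm (f _)]

theorem sqrt_sum_norm_ft_sq (f : ZMod p → ℂ) : √(∑ ξ, ‖ft p f ξ‖ ^ 2) = L2 p f := by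
  simp only [L2, ft_eq_inv_mul_dft, norm_mul, norm_inv, Complex.norm_natCast, mul_pow, ← mul_sum,
    ZMod.sum_norm_dft_sq]
  field_simp

end Fourier

theorem double_cauchy_schwarz (p : ℕ) [Fact p.Prime]
    (f₀ f₁ f₂ : ZMod p → ℂ) (K : ZMod p → ZMod p → ℂ)
    (T : ℂ)
    (hT : T = ∑ n₁ : ZMod p, ∑ m₁ : ZMod p, ∑ n₂ : ZMod p, ∑ m₂ : ZMod p,
      ft p f₀ (-n₁ - n₂) * (starRingEnd ℂ) (ft p f₀ (-m₁ - n₂)) *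
        (starRingEnd ℂ) (ft p f₀ (-n₁ - m₂)) * ft p f₀ (-m₁ - m₂) *
        (K n₁ n₂ * (starRingEnd ℂ) (K m₁ n₂) * (starRingEnd ℂ) (K n₁ m₂) * K m₁ m₂)) :
    T.im = 0 ∧ 0 ≤ T.re ∧
      ‖∑ n₁ : ZMod p, ∑ n₂ : ZMod p,
          ft p f₀ (-n₁ - n₂) * ft p f₁ n₁ * ft p f₂ n₂ * K n₁ n₂‖ ≤
        L2 p f₂ * L2 p f₁ * T.re ^ ((1 : ℝ) / 4) := by
  set M : Matrix (ZMod p) (ZMod p) ℂ := of fun n₁ n₂ => ft p f₀ (-n₁ - n₂) * K n₁ n₂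
  have hT' : T = ((∑ i, ∑ i', ‖(M * Mᴴ) i i'‖ ^ 2 : ℝ) : ℂ) := by
    rw [hT, ofReal_sum_norm_mul_conjTranspose_sq]
    simp only [M, of_apply, map_mul, mul_comm, mul_assoc, mul_left_comm]
  have hS : ∑ n₁, ∑ n₂, ft p f₀ (-n₁ - n₂) * ft p f₁ n₁ * ft p f₂ n₂ * K n₁ n₂ =
      ∑ n₁, ∑ n₂, ft p f₁ n₁ * ft p f₂ n₂ * M n₁ n₂ := by
    simp only [M, of_apply, mul_comm, mul_assoc, mul_left_comm]
  refine ⟨by rw [hT']; exact Complex.ofReal_im _, by rw [hT', Complex.ofReal_re]; positivity, ?_⟩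
  rw [hS, hT', Complex.ofReal_re, ← sqrt_sum_norm_ft_sq, ← sqrt_sum_norm_ft_sq]
  exact norm_sum_sum_mul_le M _ _
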